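/- arXiv:2603.21390 — 5 statements merged into one kernel-verified Lean document; each statement's English description precedes it below -/
import Mathlib

section
/- Let V be a finite-dimensional vector space over the finite field 𝔽_q. The function 𝔑 is isotone on the lattice of subspaces of V: for all subspaces S, T ⊆ V, if S ⊆ T then 𝔑(S) ≤ 𝔑(T). -/
/-!
Common setup: `V` is a finite-dimensional vector space over a finite field `F`.
An *atom* is a one-dimensional subspace of `V`.  An *atomic decomposition* of a
subspace `S ⊆ V` is a finite set of atoms whose join (subspace sum) is `S`;
it is *minimal* if no proper subset is an atomic decomposition of `S`.
`NN S` is the number of minimal atomic decompositions of `S`.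
-/

variable {F V : Type*} [Field F] [Fintype F] [AddCommGroup V] [Module F V]
  [FiniteDimensional F V]

/-- `𝔞` is an atomic decomposition of `S`. -/
def IsAtomicDecomp (S : Submodule F V) (𝔞 : Finset (Submodule F V)) : Prop :=
  (∀ A ∈ 𝔞, Module.finrank F A = 1) ∧ 𝔞.sup id = S

/-- `𝔞` is a minimal atomic decomposition of `S`. -/
def IsMinAtomicDecomp (S : Submodule F V) (𝔞 : Finset (Submodule F V)) : Prop :=
  IsAtomicDecomp S 𝔞 ∧ ∀ 𝔟 ⊂ 𝔞, ¬ IsAtomicDecomp S 𝔟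

/-- `NN S` is the number `𝔑(S)` of minimal atomic decompositions of `S`. -/
noncomputable def NN (S : Submodule F V) : ℕ :=
  Set.ncard {𝔞 : Finset (Submodule F V) | IsMinAtomicDecomp S 𝔞}

lemma mem_le_of_decomp {S : Submodule F V} {𝔞 : Finset (Submodule F V)}
    (h : IsAtomicDecomp S 𝔞) {A : Submodule F V} (hA : A ∈ 𝔞) : A ≤ S := by
  have := Finset.le_sup (f := id) hA
  rw [h.2] at this
  exact this

/-- Key step: adding one new atom. -/
lemma NN_le_sup_span (S : Submodule F V) (v : V) (hv : v ∉ S) :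
    NN S ≤ NN (S ⊔ Submodule.span F {v}) := by
  classical
  have hfinV : Finite V := Module.finite_of_finite F
  have hv0 : v ≠ 0 := fun h => hv (h ▸ S.zero_mem)
  set L := Submodule.span F {v} with hLdef
  have hL1 : Module.finrank F L = 1 := finrank_span_singleton hv0
  have hLS : ¬ L ≤ S := fun hle => hv (hle (Submodule.mem_span_singleton_self v))
  have hlt : S < S ⊔ L := lt_of_le_of_ne le_sup_left (fun he => hLS (he ▸ le_sup_right))
  have hrk : Module.finrank F S < Module.finrank F ↥(S ⊔ L) :=
    Submodule.finrank_lt_finrank_of_lt hlt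
  haveI : Finite (Submodule F V) := inferInstance
  haveI : Fintype (Submodule F V) := Fintype.ofFinite _
  haveI : Finite (Finset (Submodule F V)) := inferInstance
  apply Set.ncard_le_ncard_of_injOn (fun 𝔞 => insert L 𝔞) ?_ ?_ (Set.toFinite _)
  · -- maps to
    rintro 𝔞 ⟨⟨hatoms, hsup⟩, hmin⟩
    constructor
    · refine ⟨?_, ?_⟩
      · intro A hA
        rcases Finset.mem_insert.mp hA with rfl | hA
        · exact hL1
        · exact hatoms A hA
      · rw [Finset.sup_insert, hsup, id]
        exact sup_comm L S
    · -- minimality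
      rintro 𝔟 h𝔟 hb
      by_cases hLb : L ∈ 𝔟
      · -- remove L from 𝔟
        set 𝔟' := 𝔟.erase L with h𝔟'
        have hsub : 𝔟' ⊆ 𝔞 := by
          intro x hx
          have hx𝔟 := Finset.mem_of_mem_erase hx
          rcases Finset.mem_insert.mp (h𝔟.subset hx𝔟) with rfl | hx𝔞
          · exact absurd rfl (Finset.ne_of_mem_erase hx)
          · exact hx𝔞
        have hproper : 𝔟' ⊂ 𝔞 := by
          obtain ⟨a, ha, hna⟩ := Finset.exists_of_ssubset h𝔟
          have ha𝔞 : a ∈ 𝔞 := by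
            rcases Finset.mem_insert.mp ha with rfl | h
            · exact absurd hLb hna
            · exact h
          exact Finset.ssubset_iff_of_subset hsub |>.mpr
            ⟨a, ha𝔞, fun hx => hna (Finset.mem_of_mem_erase hx)⟩
        have h𝔟eq : 𝔟 = insert L 𝔟' := (Finset.insert_erase hLb).symm
        have hsup' : 𝔟'.sup id ⊔ L = S ⊔ L := by
          have := hb.2
          rw [h𝔟eq, Finset.sup_insert, id] at this
          rw [sup_comm]
          exact this
        have hle' : 𝔟'.sup id ≤ S := by
          apply Finset.sup_le
          intro x hx
          exact mem_le_of_decomp ⟨hatoms, hsup⟩ (hsub hx)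
        -- dimension count forces 𝔟'.sup id = S
        have hsupeq : 𝔟'.sup id = S := by
          apply Submodule.eq_of_le_of_finrank_le hle'
          have h1 : Module.finrank F ↥(𝔟'.sup id ⊔ L) ≤
              Module.finrank F ↥(𝔟'.sup id) + 1 := by
            have := Submodule.finrank_sup_add_finrank_inf_eq (𝔟'.sup id) L
            omega
          rw [hsup'] at h1
          omega
        exact hmin 𝔟' hproper ⟨fun A hA => hatoms A (hsub hA), hsupeq⟩
      · -- L ∉ 𝔟 : then 𝔟 ⊆ 𝔞, so sup 𝔟 ≤ S, but L ≤ sup 𝔟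
        have hsub : 𝔟 ⊆ 𝔞 := by
          intro x hx
          rcases Finset.mem_insert.mp (h𝔟.subset hx) with rfl | h
          · exact absurd hx hLb
          · exact h
        have hle' : 𝔟.sup id ≤ S := by
          apply Finset.sup_le
          intro x hx
          exact mem_le_of_decomp ⟨hatoms, hsup⟩ (hsub hx)
        rw [hb.2] at hle'
        exact hLS (le_trans le_sup_right hle')
  · -- injectivity
    intro 𝔞₁ h₁ 𝔞₂ h₂ hins
    have hL1' : L ∉ 𝔞₁ := fun hmem => hLS (mem_le_of_decomp h₁.1 hmem)
    have hL2' : L ∉ 𝔞₂ := fun hmem => hLS (mem_le_of_decomp h₂.1 hmem)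
    have : (insert L 𝔞₁).erase L = (insert L 𝔞₂).erase L :=
      congrArg (Finset.erase · L) hins
    rwa [Finset.erase_insert hL1', Finset.erase_insert hL2'] at this

/-- Induction on codimension. -/
lemma NN_isotone_aux (n : ℕ) : ∀ S T : Submodule F V, S ≤ T →
    Module.finrank F T ≤ Module.finrank F S + n → NN S ≤ NN T := by
  induction n with
  | zero =>
    intro S T h hrk
    have : S = T := Submodule.eq_of_le_of_finrank_le h (by omega)
    rw [this]
  | succ n ih =>
    intro S T h hrk
    by_cases heq : S = T
    · rw [heq]
    · have hlt : S < T := lt_of_le_of_ne h heq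
      obtain ⟨v, hvT, hvS⟩ := SetLike.exists_of_lt hlt
      set S' := S ⊔ Submodule.span F {v} with hS'
      have hS'T : S' ≤ T := sup_le h
        ((Submodule.span_singleton_le_iff_mem v T).mpr hvT)
      have hltS' : S < S' := by
        refine lt_of_le_of_ne le_sup_left fun he => hvS ?_
        rw [he]
        exact Submodule.mem_sup_right (Submodule.mem_span_singleton_self v)
      have hrkS' : Module.finrank F S < Module.finrank F S' :=
        Submodule.finrank_lt_finrank_of_lt hltS'
      exact le_trans (NN_le_sup_span S v hvS) (ih S' T hS'T (by omega))

/-- `𝔑` is isotone: `S ⊆ T` implies `𝔑(S) ≤ 𝔑(T)`. -/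
theorem NN_isotone (S T : Submodule F V) (h : S ≤ T) : NN S ≤ NN T :=
  NN_isotone_aux (Module.finrank F T) S T h (by omega)
end

section
/- Let V be a finite-dimensional vector space over the finite field 𝔽_q. The function 𝔑 is log-supermodular on the lattice of subspaces of V: for all subspaces S, T ⊆ V, 𝔑(S) · 𝔑(T) ≤ 𝔑(S ∩ T) · 𝔑(S + T). -/
/-!
Common setup: `V` is a finite-dimensional vector space over a finite field `F`.
An *atom* is a one-dimensional subspace of `V`.  An *atomic decomposition* of a
subspace `S ⊆ V` is a finite set of atoms whose join (subspace sum) is `S`;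
it is *minimal* if no proper subset is an atomic decomposition of `S`.
`NN S` is the number of minimal atomic decompositions of `S`.
-/

variable {F V : Type*} [Field F] [Fintype F] [AddCommGroup V] [Module F V]
  [FiniteDimensional F V]

/-!
A minimal atomic decomposition of `S` is a set of `d = dim S` atoms spanning `S`, i.e. the set of
lines of a basis of `S`, and it arises from exactly `d! (q - 1)^d` ordered bases (order the lines,
pick a nonzero vector on each). Counting ordered bases therefore gives
`𝔑(S) = ∏_{i<d} (q^d - q^i) / (d! (q - 1)^d)`, a function of `d` alone whose successive ratios
`q^d / (d + 1) · (q^(d+1) - 1) / (q - 1)` increase with `d`. Such a log-convex sequence satisfies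
`𝔑(c + k) 𝔑(b) ≤ 𝔑(c) 𝔑(b + k)` for `c ≤ b`; take `c = dim (S ∩ T)`, `b = dim T` and
`k = dim S - c`, which equals `dim (S + T) - b` by Grassmann's formula.
-/

open Module

theorem mul_le_mul_of_monotone_ratio {R : Type*} [CommSemiring R] [PartialOrder R]
    [IsOrderedRing R] {g r : ℕ → R} (hg : ∀ n, g (n + 1) = r n * g n) (hr : Monotone r)
    (hr0 : ∀ n, 0 ≤ r n) (hg0 : ∀ n, 0 ≤ g n) {b c : ℕ} (hcb : c ≤ b) (k : ℕ) :
    g (c + k) * g b ≤ g c * g (b + k) := by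
  induction k with
  | zero => rw [add_zero, add_zero, mul_comm]
  | succ k ih =>
    calc g (c + (k + 1)) * g b = r (c + k) * (g (c + k) * g b) := by rw [← add_assoc, hg, mul_assoc]
      _ ≤ r (c + k) * (g c * g (b + k)) := mul_le_mul_of_nonneg_left ih (hr0 _)
      _ ≤ r (b + k) * (g c * g (b + k)) :=
        mul_le_mul_of_nonneg_right (hr (by omega)) (mul_nonneg (hg0 _) (hg0 _))
      _ = g c * g (b + (k + 1)) := by rw [← add_assoc, hg, mul_left_comm]

def minAtomicDecompCount (q d : ℕ) : ℚ :=
  (∏ i ∈ Finset.range d, ((q : ℚ) ^ d - q ^ i)) / (d.factorial * ((q : ℚ) - 1) ^ d)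

section minAtomicDecompCount

variable {q : ℕ}

theorem minAtomicDecompCount_nonneg (hq : 1 < q) (d : ℕ) : 0 ≤ minAtomicDecompCount q d := by
  have hq' : (1 : ℚ) ≤ q := by exact_mod_cast hq.le
  refine div_nonneg (Finset.prod_nonneg fun i hi ↦ ?_) (by have := sub_nonneg.2 hq'; positivity)
  exact sub_nonneg.2 (pow_le_pow_right₀ hq' (Finset.mem_range.1 hi).le)

theorem minAtomicDecompCount_succ (hq : 1 < q) (n : ℕ) :
    minAtomicDecompCount q (n + 1) =
      (q : ℚ) ^ n / (n + 1) * (((q : ℚ) ^ (n + 1) - 1) / (q - 1)) * minAtomicDecompCount q n := by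
  have hq' : (q : ℚ) - 1 ≠ 0 := sub_ne_zero.2 (by exact_mod_cast hq.ne')
  have hshift : ∀ i, (q : ℚ) ^ (n + 1) - q ^ (i + 1) = q * (q ^ n - q ^ i) := fun i ↦ by ring
  unfold minAtomicDecompCount
  rw [Finset.prod_range_succ', Finset.prod_congr rfl fun i _ ↦ hshift i, Finset.prod_mul_distrib,
    Finset.prod_const, Finset.card_range, Nat.factorial_succ]
  push_cast
  field_simp
  ring

theorem monotone_minAtomicDecompCount_ratio (hq : 1 < q) :
    Monotone fun n : ℕ ↦ (q : ℚ) ^ n / (n + 1) * (((q : ℚ) ^ (n + 1) - 1) / (q - 1)) := by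
  have hq' : (1 : ℚ) < q := by exact_mod_cast hq
  refine Monotone.mul (monotone_nat_of_le_succ fun n ↦ ?_)
    (monotone_nat_of_le_succ fun n ↦ ?_) (fun n ↦ by positivity)
    (fun n ↦ div_nonneg (sub_nonneg.2 (one_le_pow₀ hq'.le)) (sub_nonneg.2 hq'.le))
  · rw [div_le_div_iff₀ (by positivity) (by positivity), pow_succ]
    have hq2 : (2 : ℚ) ≤ q := by exact_mod_cast hq
    push_cast
    nlinarith [mul_nonneg (pow_pos (zero_lt_one.trans hq') n).le
      (show (0 : ℚ) ≤ q * (n + 1) - (n + 2) by nlinarith)]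
  · exact div_le_div_of_nonneg_right (by gcongr <;> first | exact hq'.le | omega)
      (sub_nonneg.2 hq'.le)

theorem minAtomicDecompCount_mul_le (hq : 1 < q) {b c : ℕ} (hcb : c ≤ b) (k : ℕ) :
    minAtomicDecompCount q (c + k) * minAtomicDecompCount q b ≤
      minAtomicDecompCount q c * minAtomicDecompCount q (b + k) := by
  have hq' : (1 : ℚ) ≤ q := by exact_mod_cast hq.le
  exact mul_le_mul_of_monotone_ratio (minAtomicDecompCount_succ hq)
    (monotone_minAtomicDecompCount_ratio hq)
    (fun n ↦ mul_nonneg (by positivity) (div_nonneg (sub_nonneg.2 (one_le_pow₀ hq'))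
      (sub_nonneg.2 hq')))
    (minAtomicDecompCount_nonneg hq) hcb k

end minAtomicDecompCount

section Atoms

variable {K W : Type*} [DivisionRing K] [AddCommGroup W] [Module K W]

theorem Submodule.span_singleton_eq_of_finrank_eq_one {A : Submodule K W}
    (hA : finrank K A = 1) {v : W} (hvA : v ∈ A) (hv : v ≠ 0) : K ∙ v = A :=
  ((Submodule.isAtom_iff_finrank_eq_one.mpr hA).le_iff_eq (by simpa using hv)).mp
    ((Submodule.span_singleton_le_iff_mem v A).mpr hvA)

theorem Submodule.exists_span_singleton_eq_of_finrank_eq_one {A : Submodule K W}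
    (hA : finrank K A = 1) : ∃ v ≠ 0, K ∙ v = A := by
  obtain ⟨v, hvA, hv⟩ := A.ne_bot_iff.mp (Submodule.isAtom_iff_finrank_eq_one.mpr hA).ne_bot
  exact ⟨v, hv, Submodule.span_singleton_eq_of_finrank_eq_one hA hvA hv⟩

theorem Finset.sup_id_eq_span_range {𝔞 : Finset (Submodule K W)} {v : 𝔞 → W}
    (hv : ∀ A, K ∙ v A = A) : 𝔞.sup id = Submodule.span K (Set.range v) := by
  rw [Submodule.span_range_eq_iSup, Finset.sup_eq_iSup, iSup_subtype']
  simp [hv]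

theorem finrank_finset_sup_le_card {𝔞 : Finset (Submodule K W)}
    (h𝔞 : ∀ A ∈ 𝔞, finrank K A = 1) : finrank K ↥(𝔞.sup id) ≤ 𝔞.card := by
  choose v _ hv using fun A : 𝔞 ↦ Submodule.exists_span_singleton_eq_of_finrank_eq_one (h𝔞 A A.2)
  rw [Finset.sup_id_eq_span_range hv, ← Fintype.card_coe]
  exact finrank_range_le_card v

theorem finrank_finset_sup_eq_card {𝔞 : Finset (Submodule K W)}
    (h𝔞 : ∀ A ∈ 𝔞, finrank K A = 1) (hind : 𝔞.SupIndep id) :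
    finrank K ↥(𝔞.sup id) = 𝔞.card := by
  choose v hv0 hv using fun A : 𝔞 ↦ Submodule.exists_span_singleton_eq_of_finrank_eq_one (h𝔞 A A.2)
  have hli : LinearIndependent K v := hind.independent.linearIndependent _
    (fun A ↦ by rw [Function.comp_apply, id, ← hv A]; exact Submodule.mem_span_singleton_self _) hv0
  rw [Finset.sup_id_eq_span_range hv, finrank_span_eq_card hli, Fintype.card_coe]

end Atoms

section Decompositions

variable {K W : Type*} [Field K] [AddCommGroup W] [Module K W]
  {S : Submodule K W} {𝔞 : Finset (Submodule K W)}

theorem IsAtomicDecomp.finrank_le_card (h : IsAtomicDecomp S 𝔞) : finrank K S ≤ 𝔞.card :=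
  h.2 ▸ finrank_finset_sup_le_card h.1

theorem IsMinAtomicDecomp.supIndep (h : IsMinAtomicDecomp S 𝔞) : 𝔞.SupIndep id := by
  classical
  rw [Finset.supIndep_iff_disjoint_erase]
  intro A hA
  rw [id, ← (Submodule.isAtom_iff_finrank_eq_one.mpr (h.1.1 A hA)).not_le_iff_disjoint]
  intro hle
  refine h.2 _ (Finset.erase_ssubset hA) ⟨fun B hB ↦ h.1.1 B (Finset.mem_of_mem_erase hB), ?_⟩
  have hsup := Finset.sup_insert (f := id) (b := A) (s := 𝔞.erase A)
  rw [Finset.insert_erase hA] at hsup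
  rw [← h.1.2, hsup, id, sup_eq_right.mpr hle]

theorem isMinAtomicDecomp_iff :
    IsMinAtomicDecomp S 𝔞 ↔ IsAtomicDecomp S 𝔞 ∧ 𝔞.card = finrank K S := by
  refine ⟨fun h ↦ ⟨h.1, ?_⟩, fun ⟨h, hcard⟩ ↦ ⟨h, fun 𝔟 h𝔟 hdec ↦ ?_⟩⟩
  · rw [← h.1.2, finrank_finset_sup_eq_card h.1.1 h.supIndep]
  · exact (Finset.card_lt_card h𝔟).not_ge (hcard ▸ hdec.finrank_le_card)

theorem isMinAtomicDecomp_image_span_singleton [FiniteDimensional K S]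
    {s : Fin (finrank K S) → W} (hli : LinearIndependent K s) (hS : ∀ i, s i ∈ S) :
    IsMinAtomicDecomp S (Finset.univ.image (K ∙ s ·)) := by
  have hinj : Function.Injective (K ∙ s ·) :=
    hli.iSupIndep_span_singleton.injective (by simpa using hli.ne_zero)
  have hspan : ⨆ i, K ∙ s i = S := by
    rw [← Submodule.span_range_eq_iSup]
    refine Submodule.eq_of_le_of_finrank_eq (Submodule.span_le.mpr (Set.range_subset_iff.mpr hS)) ?_
    rw [finrank_span_eq_card hli, Fintype.card_fin]
  refine isMinAtomicDecomp_iff.mpr ⟨⟨?_, ?_⟩, ?_⟩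
  · simpa using fun i ↦ finrank_span_singleton (hli.ne_zero i)
  · rw [Finset.sup_image, Finset.sup_eq_iSup]
    simpa using hspan
  · rw [Finset.card_image_of_injective _ hinj, Finset.card_univ, Fintype.card_fin]

theorem IsMinAtomicDecomp.image_span_singleton_eq_iff (h : IsMinAtomicDecomp S 𝔞)
    {s : Fin (finrank K S) → W} :
    (LinearIndependent K s ∧ ∀ i, s i ∈ S) ∧ Finset.univ.image (K ∙ s ·) = 𝔞 ↔
      ∃ e : Fin (finrank K S) ≃ 𝔞, ∀ i, s i ≠ 0 ∧ s i ∈ (e i : Submodule K W) := by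
  constructor
  · rintro ⟨⟨hli, -⟩, himg⟩
    let g : Fin (finrank K S) → 𝔞 := fun i ↦
      ⟨K ∙ s i, himg ▸ Finset.mem_image_of_mem _ (Finset.mem_univ i)⟩
    have hg : Function.Bijective g := by
      refine (Fintype.bijective_iff_injective_and_card g).mpr ⟨fun i j hij ↦ ?_, ?_⟩
      · exact hli.iSupIndep_span_singleton.injective (by simpa using hli.ne_zero)
          (congrArg Subtype.val hij)
      · rw [Fintype.card_fin, Fintype.card_coe, (isMinAtomicDecomp_iff.mp h).2]
    exact ⟨Equiv.ofBijective g hg, fun i ↦ ⟨hli.ne_zero i, Submodule.mem_span_singleton_self _⟩⟩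
  · rintro ⟨e, he⟩
    have hspan : (K ∙ s ·) = fun i ↦ (e i : Submodule K W) := funext fun i ↦
      Submodule.span_singleton_eq_of_finrank_eq_one (h.1.1 _ (e i).2) (he i).2 (he i).1
    have hind : iSupIndep (K ∙ s ·) := hspan ▸ h.supIndep.independent.comp e.injective
    refine ⟨⟨(iSupIndep_iff_linearIndependent_of_ne_zero fun i ↦ (he i).1).mp hind,
      fun i ↦ h.1.2 ▸ Finset.le_sup (f := id) (e i).2 (he i).2⟩, ?_⟩
    rw [hspan]
    ext A
    simp only [Finset.mem_image, Finset.mem_univ, true_and]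
    exact ⟨fun ⟨i, hi⟩ ↦ hi ▸ (e i).2, fun hA ↦ ⟨e.symm ⟨A, hA⟩, by simp⟩⟩

end Decompositions

section FiniteField

variable {K W : Type*} [Field K] [Fintype K] [AddCommGroup W] [Module K W] [Finite W]

local notation "q" => Fintype.card K

theorem card_linearIndependent_mem (S : Submodule K W) :
    Nat.card {s : Fin (finrank K S) → W // LinearIndependent K s ∧ ∀ i, s i ∈ S} =
      ∏ i ∈ Finset.range (finrank K S), (q ^ finrank K S - q ^ i) := by
  rw [← Fin.prod_univ_eq_prod_range, ← card_linearIndependent le_rfl]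
  exact Nat.card_congr
    { toFun s := ⟨fun i ↦ ⟨s.1 i, s.2.2 i⟩, LinearIndependent.of_comp S.subtype s.2.1⟩
      invFun s := ⟨fun i ↦ s.1 i, s.2.map' S.subtype S.ker_subtype, fun i ↦ (s.1 i).2⟩ }

theorem card_erase_zero_filter_mem [Fintype W] [DecidableEq W] {A : Submodule K W}
    [DecidablePred (· ∈ A)] (hA : finrank K A = 1) :
    ((Finset.univ.filter (· ∈ A)).erase 0).card = q - 1 := by
  rw [Finset.card_erase_of_mem (by simp), ← Fintype.card_subtype, ← Nat.card_eq_fintype_card,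
    Module.natCard_eq_pow_finrank (K := K), hA, pow_one, Nat.card_eq_fintype_card]

theorem IsMinAtomicDecomp.card_fiber_image_span_singleton {S : Submodule K W}
    {𝔞 : Finset (Submodule K W)} (h : IsMinAtomicDecomp S 𝔞) :
    Nat.card {s : Fin (finrank K S) → W //
        (LinearIndependent K s ∧ ∀ i, s i ∈ S) ∧ Finset.univ.image (K ∙ s ·) = 𝔞} =
      (finrank K S).factorial * (q - 1) ^ finrank K S := by
  classical
  have := Fintype.ofFinite W
  let P : (Fin (finrank K S) ≃ 𝔞) → Finset (Fin (finrank K S) → W) := fun e ↦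
    Fintype.piFinset fun i ↦ (Finset.univ.filter (· ∈ (e i : Submodule K W))).erase 0
  have hP : ∀ e s, s ∈ P e ↔ ∀ i, s i ≠ 0 ∧ s i ∈ (e i : Submodule K W) := by
    simp [P]
  have hdisj : (Set.univ : Set (Fin (finrank K S) ≃ 𝔞)).PairwiseDisjoint P := by
    refine fun e _ e' _ hne ↦ Finset.disjoint_left.mpr fun s hs hs' ↦ hne (Equiv.ext fun i ↦ ?_)
    rw [hP] at hs hs'
    exact Subtype.ext <| by
      rw [← Submodule.span_singleton_eq_of_finrank_eq_one (h.1.1 _ (e i).2) (hs i).2 (hs i).1,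
        ← Submodule.span_singleton_eq_of_finrank_eq_one (h.1.1 _ (e' i).2) (hs' i).2 (hs' i).1]
  have hfiber : Finset.univ.filter (fun s : Fin (finrank K S) → W ↦
      (LinearIndependent K s ∧ ∀ i, s i ∈ S) ∧ Finset.univ.image (K ∙ s ·) = 𝔞) =
        Finset.univ.biUnion P := by
    ext s
    simp only [Finset.mem_filter, Finset.mem_univ, true_and, Finset.mem_biUnion, hP,
      h.image_span_singleton_eq_iff]
  rw [Nat.card_eq_fintype_card, Fintype.card_subtype, hfiber,
    Finset.card_biUnion (by simpa using hdisj)]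
  have hcard : Fintype.card (Fin (finrank K S)) = Fintype.card 𝔞 := by
    rw [Fintype.card_fin, Fintype.card_coe, (isMinAtomicDecomp_iff.mp h).2]
  simp only [P, Fintype.card_piFinset]
  rw [Finset.sum_congr rfl fun (e : Fin (finrank K S) ≃ 𝔞) _ ↦ Finset.prod_congr rfl fun i _ ↦
    card_erase_zero_filter_mem (h.1.1 _ (e i).2)]
  simp [Fintype.card_equiv (Fintype.equivOfCardEq hcard)]

theorem NN_mul_factorial_mul_pow (S : Submodule K W) :
    NN S * ((finrank K S).factorial * (q - 1) ^ finrank K S) =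
      ∏ i ∈ Finset.range (finrank K S), (q ^ finrank K S - q ^ i) := by
  classical
  have := Fintype.ofFinite W
  have : Finite (Submodule K W) := Finite.of_injective _ SetLike.coe_injective
  have := Fintype.ofFinite (Submodule K W)
  have hmaps : ∀ s ∈ Finset.univ.filter fun s : Fin (finrank K S) → W ↦
      LinearIndependent K s ∧ ∀ i, s i ∈ S,
        Finset.univ.image (K ∙ s ·) ∈ Finset.univ.filter (IsMinAtomicDecomp S) := by
    simp only [Finset.mem_filter_univ]
    exact fun s hs ↦ isMinAtomicDecomp_image_span_singleton hs.1 hs.2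
  rw [← card_linearIndependent_mem, Nat.card_eq_fintype_card, Fintype.card_subtype,
    Finset.card_eq_sum_card_fiberwise hmaps, Finset.sum_congr rfl fun 𝔞 h𝔞 ↦ ?_, Finset.sum_const,
    smul_eq_mul]
  · rw [NN, Set.ncard_eq_toFinset_card', Set.toFinset_ofPred]
  · rw [Finset.filter_filter, ← Fintype.card_subtype, ← Nat.card_eq_fintype_card]
    exact (Finset.mem_filter.mp h𝔞).2.card_fiber_image_span_singleton

theorem NN_eq_minAtomicDecompCount (S : Submodule K W) :
    (NN S : ℚ) = minAtomicDecompCount q (finrank K S) := by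
  have hq : (1 : ℚ) < q := by exact_mod_cast Fintype.one_lt_card
  rw [minAtomicDecompCount, eq_div_iff (by have := sub_pos.2 hq; positivity)]
  have hcount := congrArg (Nat.cast : ℕ → ℚ) (NN_mul_factorial_mul_pow S)
  rw [Nat.cast_prod, Finset.prod_congr rfl fun i hi ↦ Nat.cast_sub
    (Nat.pow_le_pow_right Fintype.card_pos (Finset.mem_range.1 hi).le)] at hcount
  push_cast [Nat.cast_sub Fintype.card_pos] at hcount
  exact hcount

end FiniteField

/-- `𝔑` is log-supermodular on the lattice of subspaces:
`𝔑(S) · 𝔑(T) ≤ 𝔑(S ∩ T) · 𝔑(S + T)`. -/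
theorem NN_log_supermodular (S T : Submodule F V) :
    NN S * NN T ≤ NN (S ⊓ T) * NN (S ⊔ T) := by
  have : Finite V := Module.finite_of_finite F
  obtain ⟨k, hS⟩ := Nat.exists_eq_add_of_le (Submodule.finrank_mono (inf_le_left : S ⊓ T ≤ S))
  have hST : finrank F ↥(S ⊔ T) = finrank F T + k := by
    have := Submodule.finrank_sup_add_finrank_inf_eq S T
    omega
  rw [← Nat.cast_le (α := ℚ)]
  push_cast
  simp only [NN_eq_minAtomicDecompCount, hS, hST]
  exact minAtomicDecompCount_mul_le Fintype.one_lt_card (Submodule.finrank_mono inf_le_right) k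
end

section
/- Let V be a finite-dimensional vector space over the finite field 𝔽_q. The function 𝔑 is supermodular on the lattice of subspaces of V: for all subspaces S, T ⊆ V, 𝔑(S) + 𝔑(T) ≤ 𝔑(S ∩ T) + 𝔑(S + T). -/
/-!
Common setup: `V` is a finite-dimensional vector space over a finite field `F`.
An *atom* is a one-dimensional subspace of `V`.  An *atomic decomposition* of a
subspace `S ⊆ V` is a finite set of atoms whose join (subspace sum) is `S`;
it is *minimal* if no proper subset is an atomic decomposition of `S`.
`NN S` is the number of minimal atomic decompositions of `S`.
-/

variable {F V : Type*} [Field F] [Fintype F] [AddCommGroup V] [Module F V]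
  [FiniteDimensional F V]

open Module Submodule

namespace NNSupermodularAux

lemma finrank_sup_le' (p q : Submodule F V) :
    finrank F ↥(p ⊔ q) ≤ finrank F p + finrank F q := by
  have := Submodule.finrank_sup_add_finrank_inf_eq p q
  omega

lemma finrank_sup_le_card (𝔞 : Finset (Submodule F V))
    (h : ∀ A ∈ 𝔞, finrank F A = 1) :
    finrank F (𝔞.sup id : Submodule F V) ≤ 𝔞.card := by
  classical
  induction 𝔞 using Finset.induction_on with
  | empty => simp
  | @insert A s hA ih =>
    rw [Finset.sup_insert, Finset.card_insert_of_notMem hA]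
    have h1 : finrank F (A : Submodule F V) = 1 := h A (Finset.mem_insert_self A s)
    have h2 : finrank F (s.sup id : Submodule F V) ≤ s.card :=
      ih fun B hB => h B (Finset.mem_insert_of_mem hB)
    have h3 := finrank_sup_le' (A : Submodule F V) (s.sup id)
    simp only [id] at *
    omega

lemma iSup_coe_eq_sup (𝔞 : Finset (Submodule F V)) :
    ⨆ A : ↥𝔞, (A : Submodule F V) = 𝔞.sup id :=
  le_antisymm (iSup_le fun A => Finset.le_sup (f := id) A.2)
    (Finset.sup_le fun A hA => le_iSup_of_le ⟨A, hA⟩ le_rfl)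

lemma atom_gen {A : Submodule F V} (hA : finrank F A = 1) :
    ∃ v : V, v ≠ 0 ∧ Submodule.span F {v} = A := by
  have hbot : A ≠ ⊥ := by
    intro h
    rw [h] at hA
    simp [finrank_bot] at hA
  obtain ⟨v, hvA, hv0⟩ := Submodule.exists_mem_ne_zero_of_ne_bot hbot
  have hle : Submodule.span F {v} ≤ A := (Submodule.span_singleton_le_iff_mem v A).mpr hvA
  refine ⟨v, hv0, Submodule.eq_of_le_of_finrank_le hle ?_⟩
  rw [hA, finrank_span_singleton hv0]

/-- Any subspace has an atomic decomposition of cardinality its finrank. -/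
lemma exists_decomp (U : Submodule F V) :
    ∃ 𝔣 : Finset (Submodule F V), IsAtomicDecomp U 𝔣 ∧ 𝔣.card = finrank F U := by
  classical
  set n := finrank F U with hn
  let b : Basis (Fin n) F U := Module.finBasis F U
  have hne : ∀ i, (b i : V) ≠ 0 := by
    intro i
    simpa using b.ne_zero i
  set f : Fin n → Submodule F V := fun i => Submodule.span F {(b i : V)} with hf
  have hinj : Function.Injective f := by
    intro i j hij
    by_contra hij'
    have h1 : (b i : V) ∈ Submodule.span F {(b j : V)} := by
      show (b i : V) ∈ f j
      rw [← hij]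
      exact Submodule.mem_span_singleton_self _
    have h2 : Submodule.span F {(b j : V)} = Submodule.map U.subtype (Submodule.span F {b j}) := by
      rw [Submodule.map_span, Set.image_singleton]
      rfl
    rw [h2] at h1
    obtain ⟨x, hx, hxe⟩ := Submodule.mem_map.mp h1
    have hx' : x = b i := Subtype.coe_injective hxe
    rw [hx'] at hx
    have h3 : b i ∉ Submodule.span F (b '' {j}) :=
      b.linearIndependent.notMem_span_image (by simpa using hij')
    rw [Set.image_singleton] at h3
    exact h3 hx
  refine ⟨Finset.univ.image f, ⟨?_, ?_⟩, ?_⟩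
  · intro A hA
    obtain ⟨i, _, rfl⟩ := Finset.mem_image.mp hA
    exact finrank_span_singleton (hne i)
  · rw [Finset.sup_image, Function.id_comp, Finset.sup_univ_eq_iSup]
    have : ⨆ i, f i = Submodule.span F (Set.range fun i => (b i : V)) := by
      rw [Submodule.span_range_eq_iSup]
    rw [this]
    have : (Set.range fun i => (b i : V)) = U.subtype '' Set.range b := by
      rw [← Set.range_comp]; rfl
    rw [this, ← Submodule.map_span, b.span_eq, Submodule.map_subtype_top]
  · rw [Finset.card_image_of_injective _ hinj, Finset.card_univ, Fintype.card_fin]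

/-- Characterization: a minimal atomic decomposition is exactly an atomic
decomposition of cardinality `finrank S`. -/
lemma minDecomp_iff (S : Submodule F V) (𝔞 : Finset (Submodule F V)) :
    IsMinAtomicDecomp S 𝔞 ↔ IsAtomicDecomp S 𝔞 ∧ 𝔞.card = finrank F S := by
  classical
  constructor
  · rintro ⟨hdec, hmin⟩
    refine ⟨hdec, ?_⟩
    have hge : finrank F S ≤ 𝔞.card := by
      have := finrank_sup_le_card 𝔞 hdec.1
      rw [hdec.2] at this
      exact this
    rcases Nat.lt_or_ge (finrank F S) 𝔞.card with hlt | hle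
    · exfalso
      -- choose a generator for each atom
      have hgen : ∀ A : ↥𝔞, ∃ v : V, v ≠ 0 ∧ Submodule.span F {v} = (A : Submodule F V) :=
        fun A => atom_gen (hdec.1 A.1 A.2)
      choose v hv0 hvspan using hgen
      have hnli : ¬ LinearIndependent F v := by
        intro hli
        have hcard : finrank F (Submodule.span F (Set.range v)) = Fintype.card ↥𝔞 :=
          finrank_span_eq_card hli
        have hsp : Submodule.span F (Set.range v) = S := by
          rw [Submodule.span_range_eq_iSup]
          have h1 : ⨆ A : ↥𝔞, Submodule.span F {v A} = ⨆ A : ↥𝔞, (A : Submodule F V) :=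
            iSup_congr hvspan
          rw [h1, iSup_coe_eq_sup, hdec.2]
        rw [hsp, Fintype.card_coe] at hcard
        omega
      obtain ⟨g, hsum, A₀, hg0⟩ := Fintype.not_linearIndependent_iff.mp hnli
      set M : Submodule F V := ((𝔞.erase ↑A₀).sup id) with hM
      have hvM : ∀ A : ↥𝔞, A ≠ A₀ → v A ∈ M := by
        intro A hA
        have hmem : (A : Submodule F V) ∈ 𝔞.erase ↑A₀ :=
          Finset.mem_erase.mpr ⟨fun h => hA (Subtype.ext h), A.2⟩
        have hle : (A : Submodule F V) ≤ M := Finset.le_sup (f := id) hmem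
        exact hle (by rw [← hvspan A]; exact Submodule.mem_span_singleton_self _)
      have hsum' : g A₀ • v A₀ + ∑ A ∈ Finset.univ.erase A₀, g A • v A = 0 := by
        rw [Finset.add_sum_erase _ (fun A => g A • v A) (Finset.mem_univ A₀)]
        exact hsum
      have hvA₀M : v A₀ ∈ M := by
        have h1 : g A₀ • v A₀ ∈ M := by
          have h2 : g A₀ • v A₀ = -∑ A ∈ Finset.univ.erase A₀, g A • v A := by
            linear_combination (norm := module) hsum'
          rw [h2]
          exact neg_mem (Submodule.sum_mem _ fun A hA =>
            Submodule.smul_mem _ _ (hvM A (Finset.ne_of_mem_erase hA)))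
        have h3 := M.smul_mem (g A₀)⁻¹ h1
        rwa [smul_smul, inv_mul_cancel₀ hg0, one_smul] at h3
      have hA₀M : (A₀ : Submodule F V) ≤ M := by
        rw [← hvspan A₀]
        exact (Submodule.span_singleton_le_iff_mem _ _).mpr hvA₀M
      have hMS : M = S := by
        refine le_antisymm ?_ ?_
        · rw [← hdec.2]
          exact Finset.sup_mono (Finset.erase_subset _ _)
        · rw [← hdec.2]
          refine Finset.sup_le fun A hA => ?_
          rcases eq_or_ne A ↑A₀ with rfl | hAne
          · exact hA₀M
          · exact Finset.le_sup (f := id) (Finset.mem_erase.mpr ⟨hAne, hA⟩)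
      refine hmin (𝔞.erase ↑A₀) (Finset.erase_ssubset A₀.2) ?_
      exact ⟨fun A hA => hdec.1 A (Finset.mem_of_mem_erase hA), hMS⟩
    · omega
  · rintro ⟨hdec, hcard⟩
    refine ⟨hdec, fun 𝔟 h𝔟 hbdec => ?_⟩
    have h1 : finrank F S ≤ 𝔟.card := by
      have := finrank_sup_le_card 𝔟 hbdec.1
      rw [hbdec.2] at this
      exact this
    have h2 : 𝔟.card < 𝔞.card := Finset.card_lt_card h𝔟
    omega

/-- Relative complement inside a subspace. -/
lemma exists_compl_le {I T : Submodule F V} (h : I ≤ T) :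
    ∃ C : Submodule F V, C ≤ T ∧ C ⊓ I = ⊥ ∧ C ⊔ I = T := by
  obtain ⟨q, hq⟩ := Submodule.exists_isCompl (Submodule.comap T.subtype I)
  have hmap : Submodule.map T.subtype (Submodule.comap T.subtype I) = I := by
    rw [Submodule.map_comap_subtype, inf_eq_right.mpr h]
  refine ⟨Submodule.map T.subtype q, Submodule.map_subtype_le T q, ?_, ?_⟩
  · rw [← hmap, ← Submodule.map_inf _ (Submodule.injective_subtype T),
      hq.symm.inf_eq_bot, Submodule.map_bot]
  · rw [← hmap, ← Submodule.map_sup, hq.symm.sup_eq_top, Submodule.map_subtype_top]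

lemma decomp_union {U W : Submodule F V} {𝔞 𝔟 : Finset (Submodule F V)}
    [DecidableEq (Submodule F V)]
    (ha : IsAtomicDecomp U 𝔞) (hb : IsAtomicDecomp W 𝔟) (hUW : U ⊓ W = ⊥) :
    Disjoint 𝔞 𝔟 ∧ IsAtomicDecomp (U ⊔ W) (𝔞 ∪ 𝔟) := by
  have hdisj : Disjoint 𝔞 𝔟 := by
    rw [Finset.disjoint_left]
    intro A hA hB
    have h1 : A ≤ U := ha.2 ▸ Finset.le_sup (f := id) hA
    have h2 : A ≤ W := hb.2 ▸ Finset.le_sup (f := id) hB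
    have hAbot : A = ⊥ := le_bot_iff.mp (hUW ▸ le_inf h1 h2)
    have := ha.1 A hA
    rw [hAbot] at this
    simp [finrank_bot] at this
  refine ⟨hdisj, ⟨fun A hA => ?_, ?_⟩⟩
  · rcases Finset.mem_union.mp hA with h | h
    · exact ha.1 A h
    · exact hb.1 A h
  · rw [Finset.sup_union, ha.2, hb.2]

end NNSupermodularAux

open NNSupermodularAux in
/-- `𝔑` is supermodular on the lattice of subspaces:
`𝔑(S) + 𝔑(T) ≤ 𝔑(S ∩ T) + 𝔑(S + T)`. -/
theorem NN_supermodular (S T : Submodule F V) :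
    NN S + NN T ≤ NN (S ⊓ T) + NN (S ⊔ T) := by
  classical
  haveI : Finite V := Module.finite_of_finite F
  haveI : Finite (Submodule F V) :=
    Finite.of_injective (fun p : Submodule F V => (p : Set V)) SetLike.coe_injective
  haveI : Fintype (Submodule F V) := Fintype.ofFinite _
  set I := S ⊓ T with hI
  set J := S ⊔ T with hJ
  have hIS : I ≤ S := inf_le_left
  have hIT : I ≤ T := inf_le_right
  obtain ⟨C, hCT, hCI, hCIT⟩ := exists_compl_le hIT
  obtain ⟨D, hDS, hDI, hDIS⟩ := exists_compl_le hIS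
  obtain ⟨𝔣, h𝔣, h𝔣card⟩ := exists_decomp C
  obtain ⟨𝔤, h𝔤, h𝔤card⟩ := exists_decomp D
  -- lattice facts
  have hCS : C ⊓ S = ⊥ := by
    refine le_bot_iff.mp ?_
    rw [← hCI]
    exact le_inf inf_le_left (le_inf inf_le_right (inf_le_left.trans hCT))
  have hDT : D ⊓ T = ⊥ := by
    refine le_bot_iff.mp ?_
    rw [← hDI]
    exact le_inf inf_le_left (le_inf (inf_le_left.trans hDS) inf_le_right)
  have hCD : C ⊓ D = ⊥ := by
    refine le_bot_iff.mp ?_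
    rw [← hCS]
    exact le_inf inf_le_left (inf_le_right.trans hDS)
  have hSCJ : S ⊔ C = J := by
    refine le_antisymm (sup_le le_sup_left (hCT.trans le_sup_right)) ?_
    rw [hJ]
    calc S ⊔ T = S ⊔ (C ⊔ I) := by rw [hCIT]
    _ ≤ S ⊔ C := sup_le le_sup_left (sup_le le_sup_right (hIS.trans le_sup_left))
  have hTDJ : T ⊔ D = J := by
    refine le_antisymm (sup_le le_sup_right (hDS.trans le_sup_left)) ?_
    rw [hJ]
    calc S ⊔ T = (D ⊔ I) ⊔ T := by rw [hDIS]
    _ ≤ T ⊔ D := sup_le (sup_le le_sup_right (hIT.trans le_sup_left)) le_sup_left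
  -- finrank identities
  have e1 : finrank F J + finrank F I = finrank F S + finrank F T := by
    rw [hI, hJ]; exact Submodule.finrank_sup_add_finrank_inf_eq S T
  have e2 : finrank F C + finrank F I = finrank F T := by
    have := Submodule.finrank_sup_add_finrank_inf_eq C I
    rw [hCIT, hCI] at this
    simpa [finrank_bot] using this.symm
  have e3 : finrank F D + finrank F I = finrank F S := by
    have := Submodule.finrank_sup_add_finrank_inf_eq D I
    rw [hDIS, hDI] at this
    simpa [finrank_bot] using this.symm
  -- the sets of minimal decompositions
  set MS := {𝔞 : Finset (Submodule F V) | IsMinAtomicDecomp S 𝔞} with hMS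
  set MT := {𝔞 : Finset (Submodule F V) | IsMinAtomicDecomp T 𝔞} with hMT
  set MI := {𝔞 : Finset (Submodule F V) | IsMinAtomicDecomp I 𝔞} with hMI
  set MJ := {𝔞 : Finset (Submodule F V) | IsMinAtomicDecomp J 𝔞} with hMJ
  set f : Finset (Submodule F V) → Finset (Submodule F V) := fun 𝔞 => 𝔞 ∪ 𝔣 with hfdef
  set g : Finset (Submodule F V) → Finset (Submodule F V) := fun 𝔟 => 𝔟 ∪ 𝔤 with hgdef
  have hf : ∀ 𝔞 ∈ MS, f 𝔞 ∈ MJ ∧ Disjoint 𝔞 𝔣 := by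
    intro 𝔞 h𝔞
    rw [hMS, Set.mem_setOf_eq, minDecomp_iff] at h𝔞
    obtain ⟨hdisj, hdec⟩ := decomp_union h𝔞.1 h𝔣 (by rwa [inf_comm] at hCS)
    rw [hSCJ] at hdec
    refine ⟨?_, hdisj⟩
    rw [hMJ, Set.mem_setOf_eq, minDecomp_iff]
    refine ⟨hdec, ?_⟩
    rw [hfdef]
    simp only []
    rw [Finset.card_union_of_disjoint hdisj, h𝔞.2, h𝔣card]
    omega
  have hg : ∀ 𝔟 ∈ MT, g 𝔟 ∈ MJ ∧ Disjoint 𝔟 𝔤 := by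
    intro 𝔟 h𝔟
    rw [hMT, Set.mem_setOf_eq, minDecomp_iff] at h𝔟
    obtain ⟨hdisj, hdec⟩ := decomp_union h𝔟.1 h𝔤 (by rwa [inf_comm] at hDT)
    rw [hTDJ] at hdec
    refine ⟨?_, hdisj⟩
    rw [hMJ, Set.mem_setOf_eq, minDecomp_iff]
    refine ⟨hdec, ?_⟩
    rw [hgdef]
    simp only []
    rw [Finset.card_union_of_disjoint hdisj, h𝔟.2, h𝔤card]
    omega
  have hfinj : Set.InjOn f MS := by
    intro x hx y hy hxy
    calc x = (x ∪ 𝔣) \ 𝔣 := (Finset.union_sdiff_cancel_right (hf x hx).2).symm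
    _ = (y ∪ 𝔣) \ 𝔣 := by rw [show x ∪ 𝔣 = y ∪ 𝔣 from hxy]
    _ = y := Finset.union_sdiff_cancel_right (hf y hy).2
  have hginj : Set.InjOn g MT := by
    intro x hx y hy hxy
    calc x = (x ∪ 𝔤) \ 𝔤 := (Finset.union_sdiff_cancel_right (hg x hx).2).symm
    _ = (y ∪ 𝔤) \ 𝔤 := by rw [show x ∪ 𝔤 = y ∪ 𝔤 from hxy]
    _ = y := Finset.union_sdiff_cancel_right (hg y hy).2
  have hdisjfg : Disjoint 𝔣 𝔤 := (decomp_union h𝔣 h𝔤 hCD).1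
  set h : Finset (Submodule F V) → Finset (Submodule F V) := fun 𝔡 => 𝔡 \ (𝔣 ∪ 𝔤) with hhdef
  have hover : ∀ 𝔡 ∈ f '' MS ∩ g '' MT, h 𝔡 ∈ MI ∧ 𝔡 = h 𝔡 ∪ (𝔣 ∪ 𝔤) := by
    rintro 𝔡 ⟨⟨𝔞, h𝔞, h𝔞eq⟩, ⟨𝔟, h𝔟, h𝔟eq⟩⟩
    have h𝔡J : 𝔡 ∈ MJ := h𝔞eq ▸ (hf 𝔞 h𝔞).1
    rw [hMJ, Set.mem_setOf_eq, minDecomp_iff] at h𝔡J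
    have hfg𝔡 : 𝔣 ∪ 𝔤 ⊆ 𝔡 := by
      refine Finset.union_subset ?_ ?_
      · rw [← h𝔞eq]; exact Finset.subset_union_right
      · rw [← h𝔟eq]; exact Finset.subset_union_right
    have heq𝔡 : h 𝔡 ∪ (𝔣 ∪ 𝔤) = 𝔡 := Finset.sdiff_union_of_subset hfg𝔡
    rw [hMS, Set.mem_setOf_eq, minDecomp_iff] at h𝔞
    rw [hMT, Set.mem_setOf_eq, minDecomp_iff] at h𝔟
    have hsub : ∀ A ∈ h 𝔡, A ≤ I := by
      intro A hA
      rw [hhdef] at hA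
      simp only [Finset.mem_sdiff, Finset.mem_union, not_or] at hA
      obtain ⟨hA𝔡, hAf, hAg⟩ := hA
      have hAa : A ∈ 𝔞 := by
        rw [← h𝔞eq] at hA𝔡
        rcases Finset.mem_union.mp hA𝔡 with h' | h'
        · exact h'
        · exact absurd h' hAf
      have hAb : A ∈ 𝔟 := by
        rw [← h𝔟eq] at hA𝔡
        rcases Finset.mem_union.mp hA𝔡 with h' | h'
        · exact h'
        · exact absurd h' hAg
      have h1 : A ≤ S := h𝔞.1.2 ▸ Finset.le_sup (f := id) hAa
      have h2 : A ≤ T := h𝔟.1.2 ▸ Finset.le_sup (f := id) hAb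
      exact le_inf h1 h2
    have hsuple : (h 𝔡).sup id ≤ I := Finset.sup_le fun A hA => hsub A hA
    have hcardfg : (𝔣 ∪ 𝔤).card = 𝔣.card + 𝔤.card := Finset.card_union_of_disjoint hdisjfg
    have hcard : (h 𝔡).card + (𝔣 ∪ 𝔤).card = 𝔡.card :=
      Finset.card_sdiff_add_card_eq_card hfg𝔡
    have hrank1 : ∀ A ∈ h 𝔡, finrank F A = 1 := fun A hA =>
      h𝔡J.1.1 A (Finset.mem_sdiff.mp hA).1
    -- lower bound on the rank of the sup
    have hJsup : J = (h 𝔡).sup id ⊔ (C ⊔ D) := by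
      have : (𝔡.sup id : Submodule F V) = (h 𝔡).sup id ⊔ ((𝔣 ∪ 𝔤).sup id) := by
        rw [← Finset.sup_union, heq𝔡]
      rw [← h𝔡J.1.2, this, Finset.sup_union, h𝔣.2, h𝔤.2]
    have huple : finrank F J ≤ finrank F ((h 𝔡).sup id : Submodule F V)
        + (finrank F C + finrank F D) := by
      rw [hJsup]
      calc finrank F ((h 𝔡).sup id ⊔ (C ⊔ D) : Submodule F V)
          ≤ finrank F ((h 𝔡).sup id : Submodule F V) + finrank F (C ⊔ D : Submodule F V) :=
            finrank_sup_le' _ _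
      _ ≤ finrank F ((h 𝔡).sup id : Submodule F V) + (finrank F C + finrank F D) := by
            have := finrank_sup_le' C D
            omega
    have hfrle : finrank F ((h 𝔡).sup id : Submodule F V) ≤ finrank F I :=
      Submodule.finrank_mono hsuple
    have hIfr : finrank F I ≤ finrank F ((h 𝔡).sup id : Submodule F V) := by omega
    have hsupI : (h 𝔡).sup id = I := by
      refine Submodule.eq_of_le_of_finrank_le hsuple hIfr
    have hcardI : (h 𝔡).card = finrank F I := by
      have hle1 : finrank F I ≤ (h 𝔡).card := by
        have := finrank_sup_le_card (h 𝔡) hrank1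
        rw [hsupI] at this
        exact this
      omega
    refine ⟨?_, heq𝔡.symm⟩
    rw [hMI, Set.mem_setOf_eq, minDecomp_iff]
    exact ⟨⟨hrank1, hsupI⟩, hcardI⟩
  have hhinj : Set.InjOn h (f '' MS ∩ g '' MT) := by
    intro x hx y hy hxy
    rw [(hover x hx).2, (hover y hy).2, hxy]
  -- counting
  have hMSfin : MS.Finite := Set.toFinite _
  have hMTfin : MT.Finite := Set.toFinite _
  have hMIfin : MI.Finite := Set.toFinite _
  have hMJfin : MJ.Finite := Set.toFinite _
  have hNNS : NN S = MS.ncard := rfl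
  have hNNT : NN T = MT.ncard := rfl
  have step1 : NN S + NN T = (f '' MS).ncard + (g '' MT).ncard := by
    rw [hNNS, hNNT, Set.ncard_image_of_injOn hfinj, Set.ncard_image_of_injOn hginj]
  have step2 : (f '' MS).ncard + (g '' MT).ncard
      = (f '' MS ∪ g '' MT).ncard + (f '' MS ∩ g '' MT).ncard :=
    (Set.ncard_union_add_ncard_inter _ _ (hMSfin.image f) (hMTfin.image g)).symm
  have hub1 : (f '' MS ∪ g '' MT).ncard ≤ NN J := by
    refine Set.ncard_le_ncard ?_ hMJfin
    rintro 𝔡 (⟨𝔞, h𝔞, rfl⟩ | ⟨𝔟, h𝔟, rfl⟩)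
    · exact (hf 𝔞 h𝔞).1
    · exact (hg 𝔟 h𝔟).1
  have hub2 : (f '' MS ∩ g '' MT).ncard ≤ NN I := by
    have himg : (f '' MS ∩ g '' MT).ncard = (h '' (f '' MS ∩ g '' MT)).ncard :=
      (Set.ncard_image_of_injOn hhinj).symm
    rw [himg]
    refine Set.ncard_le_ncard ?_ hMIfin
    rintro 𝔠 ⟨𝔡, h𝔡, rfl⟩
    exact (hover 𝔡 h𝔡).1
  calc NN S + NN T = (f '' MS ∪ g '' MT).ncard + (f '' MS ∩ g '' MT).ncard := by
        rw [step1, step2]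
  _ ≤ NN J + NN I := Nat.add_le_add hub1 hub2
  _ = NN I + NN J := Nat.add_comm _ _
end

section
/- Let L be a lattice and let f : L → ℝ be a function taking nonnegative values that is monotone (x ≤ y implies f(x) ≤ f(y)) and log-supermodular, i.e., f(x)·f(y) ≤ f(x ⊓ y)·f(x ⊔ y) for all x, y ∈ L. Then f is supermodular: f(x) + f(y) ≤ f(x ⊓ y) + f(x ⊔ y) for all x, y ∈ L. -/
/-- On a lattice `L`, a nonnegative, monotone,
log-supermodular function `f : L → ℝ` is supermodular. -/
theorem supermodular_of_logSupermodular {L : Type*} [Lattice L] (f : L → ℝ)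
    (hnonneg : ∀ x, 0 ≤ f x)
    (hmono : ∀ x y, x ≤ y → f x ≤ f y)
    (hlog : ∀ x y, f x * f y ≤ f (x ⊓ y) * f (x ⊔ y)) :
    ∀ x y, f x + f y ≤ f (x ⊓ y) + f (x ⊔ y) := by
  intro x y
  have hb : f x ≤ f (x ⊔ y) := hmono _ _ le_sup_left
  have hc : f y ≤ f (x ⊔ y) := hmono _ _ le_sup_right
  have ha : 0 ≤ f (x ⊓ y) := hnonneg _
  have hd : 0 ≤ f (x ⊔ y) := hnonneg _
  have h := hlog x y
  nlinarith [mul_nonneg (sub_nonneg.2 hb) (sub_nonneg.2 hc), hnonneg x, hnonneg y]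
end

section
/- Let V be an N-dimensional vector space over the finite field 𝔽_q, let 𝒞 be a set of k-dimensional subspaces of V with at least two elements, and let D(𝒞) be the minimum of d_𝔑(X, Y) over distinct X, Y ∈ 𝒞. Let f(s) denote the common value of 𝔑 on s-dimensional subspaces, define s★ = max{ s ∈ {0, 1, ..., k} : 2·(f(k) − f(s)) ≥ D(𝒞) } and δ_eff = k − s★. Then |𝒞| is at most the number of k-dimensional subspaces of an (N − δ_eff + 1)-dimensional vector space over 𝔽_q, i.e., |𝒞| ≤ [N − δ_eff + 1 choose k]_q, the Gaussian binomial coefficient. -/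
set_option linter.unusedSectionVars false


/-!
Common setup: `V` is a finite-dimensional vector space over a finite field `F`.
An *atom* is a one-dimensional subspace of `V`.  An *atomic decomposition* of a
subspace `S ⊆ V` is a finite set of atoms whose join (subspace sum) is `S`;
it is *minimal* if no proper subset is an atomic decomposition of `S`.
`NN S` is the number of minimal atomic decompositions of `S`.
-/

variable {F V : Type*} [Field F] [Fintype F] [AddCommGroup V] [Module F V]
  [FiniteDimensional F V]

/-- The `𝔑`-induced distance `d_𝔑(S,T) = 𝔑(S) + 𝔑(T) − 2·𝔑(S ∩ T)`
(an integer-valued quantity). -/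
noncomputable def dN (S T : Submodule F V) : ℤ :=
  (NN S : ℤ) + (NN T : ℤ) - 2 * (NN (S ⊓ T) : ℤ)

private lemma finite_submodule (W : Type*) [AddCommGroup W] [Module F W]
    [FiniteDimensional F W] : Finite (Submodule F W) := by
  haveI : Finite W := Module.finite_of_finite F
  exact Finite.of_injective (fun p => (p : Set W)) SetLike.coe_injective

private lemma exists_submodule_finrank (W : Type*) [AddCommGroup W] [Module F W]
    [FiniteDimensional F W] {r : ℕ} (h : r ≤ Module.finrank F W) :
    ∃ p : Submodule F W, Module.finrank F ↥p = r := by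
  classical
  have b := Module.finBasis F W
  have hli : LinearIndependent F (fun i : Fin r => b (Fin.castLE h i)) :=
    b.linearIndependent.comp _ (Fin.castLE_injective h)
  exact ⟨_, by rw [finrank_span_eq_card hli, Fintype.card_fin]⟩

private lemma exists_submodule_le (W : Type*) [AddCommGroup W] [Module F W]
    [FiniteDimensional F W] (M : Submodule F W) {r : ℕ} (h : r ≤ Module.finrank F ↥M) :
    ∃ p : Submodule F W, p ≤ M ∧ Module.finrank F ↥p = r := by
  obtain ⟨q, hq⟩ := exists_submodule_finrank (F := F) ↥M h
  exact ⟨q.map M.subtype, Submodule.map_subtype_le M q,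
    by rw [← hq]; exact (Submodule.equivMapOfInjective M.subtype M.injective_subtype q).finrank_eq.symm⟩

private lemma card_grass_mono (W₁ W₂ : Type*) [AddCommGroup W₁] [Module F W₁]
    [FiniteDimensional F W₁] [AddCommGroup W₂] [Module F W₂] [FiniteDimensional F W₂]
    (h : Module.finrank F W₁ ≤ Module.finrank F W₂) (k : ℕ) :
    Nat.card {p : Submodule F W₁ // Module.finrank F ↥p = k} ≤
      Nat.card {p : Submodule F W₂ // Module.finrank F ↥p = k} := by
  obtain ⟨q, hq⟩ := exists_submodule_finrank (F := F) W₂ h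
  obtain ⟨e⟩ := FiniteDimensional.nonempty_linearEquiv_of_finrank_eq
    (R := F) (M := W₁) (M' := ↥q) hq.symm
  set φ : W₁ →ₗ[F] W₂ := q.subtype.comp e.toLinearMap with hφdef
  have hφ : Function.Injective φ := (Submodule.injective_subtype q).comp e.injective
  haveI := finite_submodule (F := F) W₂
  apply Nat.card_le_card_of_injective
    (f := fun p : {p : Submodule F W₁ // Module.finrank F ↥p = k} =>
      (⟨p.1.map φ,
        (Submodule.equivMapOfInjective φ hφ p.1).finrank_eq.symm.trans p.2⟩ :
        {p : Submodule F W₂ // Module.finrank F ↥p = k}))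
  intro a b hab
  exact Subtype.ext (Submodule.map_injective_of_injective hφ (Subtype.ext_iff.mp hab))

private lemma ncard_code_le (W : Type*) [AddCommGroup W] [Module F W]
    [FiniteDimensional F W] (𝒞 : Set (Submodule F W)) (k : ℕ)
    (h : ∀ X ∈ 𝒞, Module.finrank F ↥X = k) :
    Set.ncard 𝒞 ≤ Nat.card {p : Submodule F W // Module.finrank F ↥p = k} := by
  haveI := finite_submodule (F := F) W
  rw [← Nat.card_coe_set_eq]
  refine Nat.card_le_card_of_injective
    (f := fun x : ↥𝒞 => (⟨x.1, h x.1 x.2⟩ : {p : Submodule F W // Module.finrank F ↥p = k}))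
    (fun a b hab => by simpa [Subtype.ext_iff] using hab)

private lemma finrank_dualAnnihilator (W : Type*) [AddCommGroup W] [Module F W]
    [FiniteDimensional F W] (p : Submodule F W) :
    Module.finrank F ↥p + Module.finrank F ↥p.dualAnnihilator = Module.finrank F W := by
  have h1 : Module.finrank F ↥p.dualAnnihilator = Module.finrank F (W ⧸ p) := by
    rw [← (Submodule.dualQuotEquivDualAnnihilator p).finrank_eq]
    exact Subspace.dual_finrank_eq
  rw [h1, add_comm]
  exact Submodule.finrank_quotient_add_finrank p

private lemma card_grass_dual (W : Type*) [AddCommGroup W] [Module F W]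
    [FiniteDimensional F W] (j : ℕ) :
    Nat.card {p : Submodule F W // Module.finrank F ↥p = j} ≤
      Nat.card {p : Submodule F W // Module.finrank F ↥p = Module.finrank F W - j} := by
  haveI := finite_submodule (F := F) (Module.Dual F W)
  have step1 : Nat.card {p : Submodule F W // Module.finrank F ↥p = j} ≤
      Nat.card {p : Submodule F (Module.Dual F W) //
        Module.finrank F ↥p = Module.finrank F W - j} := by
    apply Nat.card_le_card_of_injective
      (f := fun p : {p : Submodule F W // Module.finrank F ↥p = j} =>
        (⟨p.1.dualAnnihilator, by
          have h1 := finrank_dualAnnihilator (F := F) W p.1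
          have h2 := p.2
          omega⟩ : {p : Submodule F (Module.Dual F W) //
            Module.finrank F ↥p = Module.finrank F W - j}))
    intro a b hab
    exact Subtype.ext (Subspace.dualAnnihilator_inj.mp (Subtype.ext_iff.mp hab))
  exact step1.trans (card_grass_mono _ _ (le_of_eq Subspace.dual_finrank_eq) _)

universe u

private lemma punct (d : ℕ) :
    ∀ {V' : Type u} [AddCommGroup V'] [Module F V'] [FiniteDimensional F V']
      (N k : ℕ), Module.finrank F V' = N → d + 1 ≤ k →
      ∀ 𝒞 : Set (Submodule F V'), (∀ X ∈ 𝒞, Module.finrank F ↥X = k) →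
      (∀ X ∈ 𝒞, ∀ Y ∈ 𝒞, X ≠ Y → Module.finrank F ↥(X ⊓ Y) + (d + 1) ≤ k) →
      Set.ncard 𝒞 ≤ Nat.card {W : Submodule F (Fin (N - (d + 1) + 1) → F) //
        Module.finrank F ↥W = k - (d + 1) + 1} := by
  induction d with
  | zero =>
    intro V' _ _ _ N k hV' hdk 𝒞 hk _
    rcases 𝒞.eq_empty_or_nonempty with h | ⟨X, hX⟩
    · simp [h]
    · have hkN : k ≤ N := by
        have h1 := Submodule.finrank_le X
        rw [hk X hX, hV'] at h1; exact h1
      have e1 : N - (0 + 1) + 1 = N := by omega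
      have e2 : k - (0 + 1) + 1 = k := by omega
      rw [e1, e2]
      refine (ncard_code_le V' 𝒞 k hk).trans (card_grass_mono _ _ ?_ k)
      rw [hV', Module.finrank_fin_fun]
  | succ d ih =>
    intro V' _ _ _ N k hV' hdk 𝒞 hk hpair
    rcases 𝒞.eq_empty_or_nonempty with h | ⟨X₁, hX₁⟩
    · simp [h]
    have hkN : k ≤ N := by
      have h1 := Submodule.finrank_le X₁
      rw [hk X₁ hX₁, hV'] at h1; exact h1
    obtain ⟨H, hH⟩ := exists_submodule_finrank (F := F) V'
      (show N - 1 ≤ Module.finrank F V' by omega)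
    have hchoice : ∀ X : ↥𝒞, ∃ p : Submodule F V',
        p ≤ (X : Submodule F V') ⊓ H ∧ Module.finrank F ↥p = k - 1 := by
      intro X
      apply exists_submodule_le (F := F) V' _
      have h1 := Submodule.finrank_sup_add_finrank_inf_eq (X : Submodule F V') H
      rw [hk X.1 X.2, hH] at h1
      have h2 : Module.finrank F ↥((X : Submodule F V') ⊔ H) ≤ N := by
        rw [← hV']; exact Submodule.finrank_le _
      omega
    choose p hple hprank using hchoice
    have hpH : ∀ X : ↥𝒞, p X ≤ H := fun X => (hple X).trans inf_le_right
    set g : ↥𝒞 → Submodule F ↥H := fun X => (p X).comap H.subtype with hg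
    have hgrank : ∀ X : ↥𝒞, Module.finrank F ↥(g X) = k - 1 := fun X =>
      ((Submodule.comapSubtypeEquivOfLe (hpH X)).finrank_eq).trans (hprank X)
    have hpval : ∀ X : ↥𝒞, Submodule.map H.subtype (g X) = p X := by
      intro X
      rw [hg]
      simp only
      rw [Submodule.map_comap_subtype]
      exact inf_eq_right.mpr (hpH X)
    have ginj : Function.Injective g := by
      intro a b hab
      by_contra hne
      have hvne : (a : Submodule F V') ≠ b := fun h => hne (Subtype.ext h)
      have hpe : p a = p b := by rw [← hpval a, ← hpval b, hab]
      have hle : p a ≤ (a : Submodule F V') ⊓ (b : Submodule F V') := by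
        refine le_inf ((hple a).trans inf_le_left) ?_
        rw [hpe]; exact (hple b).trans inf_le_left
      have h1 : k - 1 ≤ Module.finrank F ↥((a : Submodule F V') ⊓ (b : Submodule F V')) := by
        rw [← hprank a]; exact Submodule.finrank_mono hle
      have h2 := hpair a.1 a.2 b.1 b.2 hvne
      omega
    haveI : Finite (Submodule F ↥H) := finite_submodule (F := F) ↥H
    have hstep : Set.ncard 𝒞 ≤ Set.ncard (Set.range g) := by
      rw [← Nat.card_coe_set_eq, ← Nat.card_coe_set_eq]
      exact Nat.card_le_card_of_injective (Set.rangeFactorization g)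
        (fun a b hab => ginj (congrArg Subtype.val hab))
    have h𝒞'k : ∀ A ∈ Set.range g, Module.finrank F ↥A = k - 1 := by
      rintro A ⟨X, rfl⟩; exact hgrank X
    have h𝒞'pair : ∀ A ∈ Set.range g, ∀ B ∈ Set.range g, A ≠ B →
        Module.finrank F ↥(A ⊓ B) + (d + 1) ≤ k - 1 := by
      rintro A ⟨X, rfl⟩ B ⟨Y, rfl⟩ hne
      have hXYne : (X : Submodule F V') ≠ Y := by
        intro h; exact hne (congrArg g (Subtype.ext h))
      have hinf : g X ⊓ g Y = Submodule.comap H.subtype (p X ⊓ p Y) :=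
        (Submodule.comap_inf _ _ _).symm
      have hrk : Module.finrank F ↥(g X ⊓ g Y) = Module.finrank F ↥(p X ⊓ p Y) := by
        rw [hinf]
        exact (Submodule.comapSubtypeEquivOfLe ((inf_le_left).trans (hpH X))).finrank_eq
      have hle2 : p X ⊓ p Y ≤ (X : Submodule F V') ⊓ (Y : Submodule F V') :=
        inf_le_inf ((hple X).trans inf_le_left) ((hple Y).trans inf_le_left)
      have h3 : Module.finrank F ↥(p X ⊓ p Y) ≤
          Module.finrank F ↥((X : Submodule F V') ⊓ (Y : Submodule F V')) :=
        Submodule.finrank_mono hle2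
      have h4 := hpair X.1 X.2 Y.1 Y.2 hXYne
      omega
    have hres := ih (V' := ↥H) (N - 1) (k - 1) hH (by omega) (Set.range g) h𝒞'k h𝒞'pair
    have e1 : N - 1 - (d + 1) + 1 = N - (d + 1 + 1) + 1 := by omega
    have e2 : k - 1 - (d + 1) + 1 = k - (d + 1 + 1) + 1 := by omega
    rw [e1, e2] at hres
    exact hstep.trans hres

/-- **Singleton-type bound.** Let `V` be `N`-dimensional, `𝒞` a
set of `k`-dimensional subspaces with at least two elements, `D` the minimum of
`d_𝔑` over distinct pairs, `f s` the common value of `𝔑` on `s`-dimensional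
subspaces, `s★` the largest `s ∈ {0, …, k}` with `2·(f k − f s) ≥ D`, and
`δ_eff = k − s★`.  Then `|𝒞|` is at most the number of `k`-dimensional
subspaces of an `(N − δ_eff + 1)`-dimensional vector space over `F`, i.e. the
Gaussian binomial coefficient `[N − δ_eff + 1 choose k]_q`. -/
theorem singleton_type_bound (N k : ℕ) (hV : Module.finrank F V = N)
    (𝒞 : Set (Submodule F V)) (h𝒞k : ∀ X ∈ 𝒞, Module.finrank F X = k)
    (h𝒞 : 𝒞.Nontrivial)
    (f : ℕ → ℕ) (hf : ∀ S : Submodule F V, NN S = f (Module.finrank F S))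
    (D : ℤ)
    (hD : IsLeast {d : ℤ | ∃ X ∈ 𝒞, ∃ Y ∈ 𝒞, X ≠ Y ∧ dN X Y = d} D)
    (sStar : ℕ) (hs1 : sStar ≤ k)
    (hs2 : D ≤ 2 * ((f k : ℤ) - (f sStar : ℤ)))
    (hs3 : ∀ s ≤ k, D ≤ 2 * ((f k : ℤ) - (f s : ℤ)) → s ≤ sStar) :
    Set.ncard 𝒞 ≤
      Nat.card {W : Submodule F (Fin (N - (k - sStar) + 1) → F) //
        Module.finrank F W = k} := by
  classical
  have key : ∀ X ∈ 𝒞, ∀ Y ∈ 𝒞, X ≠ Y → Module.finrank F ↥(X ⊓ Y) ≤ sStar := by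
    intro X hX Y hY hne
    have hD2 : D ≤ dN X Y := hD.2 ⟨X, hX, Y, hY, hne, rfl⟩
    have ht : Module.finrank F ↥(X ⊓ Y) ≤ k := by
      rw [← h𝒞k X hX]; exact Submodule.finrank_mono inf_le_left
    refine hs3 _ ht ?_
    have hdn : dN X Y = 2 * ((f k : ℤ) - (f (Module.finrank F ↥(X ⊓ Y)) : ℤ)) := by
      unfold dN
      rw [hf X, hf Y, hf (X ⊓ Y), h𝒞k X hX, h𝒞k Y hY]
      ring
    rw [hdn] at hD2
    exact hD2
  obtain ⟨X₀, hX₀, Y₀, hY₀, hne₀⟩ := h𝒞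
  have hk1 : 1 ≤ k := by
    rcases Nat.eq_zero_or_pos k with hk0 | h
    · exfalso
      apply hne₀
      have h1 : X₀ = ⊥ := Submodule.finrank_eq_zero.mp (by rw [h𝒞k X₀ hX₀, hk0])
      have h2 : Y₀ = ⊥ := Submodule.finrank_eq_zero.mp (by rw [h𝒞k Y₀ hY₀, hk0])
      rw [h1, h2]
    · exact h
  have hNk : k + (k - sStar) ≤ N := by
    have h1 := Submodule.finrank_sup_add_finrank_inf_eq X₀ Y₀
    rw [h𝒞k X₀ hX₀, h𝒞k Y₀ hY₀] at h1
    have h2 : Module.finrank F ↥(X₀ ⊔ Y₀) ≤ N := by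
      rw [← hV]; exact Submodule.finrank_le _
    have h3 := key X₀ hX₀ Y₀ hY₀ hne₀
    omega
  rcases Nat.eq_zero_or_pos (k - sStar) with hδ | hδ
  · rw [hδ]
    have e1 : N - 0 + 1 = N + 1 := by omega
    rw [e1]
    refine (ncard_code_le V 𝒞 k h𝒞k).trans (card_grass_mono _ _ ?_ k)
    rw [hV, Module.finrank_fin_fun]; omega
  · obtain ⟨d, hd⟩ : ∃ d, k - sStar = d + 1 := ⟨k - sStar - 1, by omega⟩
    have hanninj : Function.Injective (Submodule.dualAnnihilator : Submodule F V → _) :=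
      fun a b h => Subspace.dualAnnihilator_inj.mp h
    have hdualrank : Module.finrank F (Module.Dual F V) = N := by
      rw [Subspace.dual_finrank_eq]; exact hV
    have h𝒟k : ∀ A ∈ Submodule.dualAnnihilator '' 𝒞, Module.finrank F ↥A = N - k := by
      rintro A ⟨X, hX, rfl⟩
      have h1 := finrank_dualAnnihilator (F := F) V X
      rw [h𝒞k X hX, hV] at h1
      omega
    have h𝒟pair : ∀ A ∈ Submodule.dualAnnihilator '' 𝒞, ∀ B ∈ Submodule.dualAnnihilator '' 𝒞,
        A ≠ B → Module.finrank F ↥(A ⊓ B) + (d + 1) ≤ N - k := by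
      rintro A ⟨X, hX, rfl⟩ B ⟨Y, hY, rfl⟩ hne
      have hXY : X ≠ Y := fun h => hne (by rw [h])
      have hinf : X.dualAnnihilator ⊓ Y.dualAnnihilator = (X ⊔ Y).dualAnnihilator :=
        (Submodule.dualAnnihilator_sup_eq X Y).symm
      rw [hinf]
      have h1 := finrank_dualAnnihilator (F := F) V (X ⊔ Y)
      have h2 := Submodule.finrank_sup_add_finrank_inf_eq X Y
      rw [h𝒞k X hX, h𝒞k Y hY] at h2
      have h3 := key X hX Y hY hXY
      rw [hV] at h1
      omega
    have hbound := punct (F := F) d N (N - k) hdualrank (by omega)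
      (Submodule.dualAnnihilator '' 𝒞) h𝒟k h𝒟pair
    rw [← Set.ncard_image_of_injective 𝒞 hanninj, hd]
    refine hbound.trans ?_
    have em : N - k - (d + 1) + 1 = N - (d + 1) + 1 - k := by omega
    rw [em]
    have hm : Module.finrank F (Fin (N - (d + 1) + 1) → F) = N - (d + 1) + 1 :=
      Module.finrank_fin_fun F
    have step := card_grass_dual (F := F) (Fin (N - (d + 1) + 1) → F) (N - (d + 1) + 1 - k)
    rw [hm] at step
    have e2 : N - (d + 1) + 1 - (N - (d + 1) + 1 - k) = k := by omega
    rw [e2] at step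
    exact step
end
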